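/- Let P be a compact convex subset of ℝ² with nonempty interior, of width w, and let m be a positive integer. Then there exists a finite set S ⊆ P with at most 2m + 5 points such that, setting P' = convexHull(S), one has P' ⊆ P and every point p ∈ P is at (Euclidean) distance at most w/m from P'. -/

import Mathlib

open MeasureTheory Pointwise

noncomputable section

abbrev Plane := EuclideanSpace ℝ (Fin 2)

/-- The width of a set `K ⊆ ℝ²`: the infimum over unit vectors `u` of the
extent of `K` in the direction `u`. -/
noncomputable def width (K : Set Plane) : ℝ :=
  sInf {w : ℝ | ∃ u : Plane, ‖u‖ = 1 ∧
    w = sSup ((fun p => (inner ℝ p u : ℝ)) '' K) - sInf ((fun p => (inner ℝ p u : ℝ)) '' K)}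

/-!
Choose a unit vector `u` realising the width `w`, so that `⟪u, ·⟫` ranges over an interval
`[c, c + w]` on `P`, and let `x` be the coordinate perpendicular to `u`. Cut `P` by the `m + 1`
lines `⟪u, ·⟫ = c + i w / m` and keep both ends of each chord, together with a leftmost and a
rightmost point of `P` in the `x` direction. For `p ∈ P` in the slab between two consecutive lines,
on each side of `p` (in `x`) there is a kept point inside that slab: a chord end if one lies on that
side, and otherwise the extreme point of `P`, which convexity forces into the slab. Hence the line
through `p` parallel to `u` meets the hull of the kept points inside the slab, at distance at most
`w / m` from `p`.
-/

open Set

section Slab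

variable {E : Type*} [AddCommGroup E] [Module ℝ E] (x y : E →ₗ[ℝ] ℝ)

theorem LinearMap.image_segment_eq_uIcc (a b : E) : y '' segment ℝ a b = uIcc (y a) (y b) := by
  rw [← segment_eq_uIcc]
  exact image_segment ℝ y.toAffineMap a b

theorem Convex.exists_apply_eq_le_max {P : Set E} (hP : Convex ℝ P) {a p : E} (ha : a ∈ P)
    (hp : p ∈ P) {t : ℝ} (ht : t ∈ uIcc (y a) (y p)) :
    ∃ r ∈ P, y r = t ∧ x r ≤ max (x a) (x p) := by
  obtain ⟨r, hr, rfl⟩ : t ∈ y '' segment ℝ a p := by rwa [y.image_segment_eq_uIcc]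
  exact ⟨r, hP.segment_subset ha hp hr, rfl,
    (x.image_segment_eq_uIcc a p ▸ mem_image_of_mem x hr).2⟩

theorem Convex.exists_mem_Icc_le_of_isMinOn {P : Set E} (hP : Convex ℝ P) {a l₁ l₂ p : E}
    {s t : ℝ} (ha : a ∈ P) (hamin : IsMinOn x P a) (hl₁ : l₁ ∈ P ∩ y ⁻¹' {s})
    (hl₁min : IsMinOn x (P ∩ y ⁻¹' {s}) l₁) (hl₂ : l₂ ∈ P ∩ y ⁻¹' {t})
    (hl₂min : IsMinOn x (P ∩ y ⁻¹' {t}) l₂) (hp : p ∈ P) (hps : y p ∈ Icc s t) :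
    ∃ q ∈ ({a, l₁, l₂} : Set E), y q ∈ Icc s t ∧ x q ≤ x p := by
  have hyl₁ : y l₁ = s := hl₁.2
  have hyl₂ : y l₂ = t := hl₂.2
  by_cases h₁ : x l₁ ≤ x p
  · exact ⟨l₁, by simp, ⟨hyl₁.ge, hyl₁.trans_le (hps.1.trans hps.2)⟩, h₁⟩
  by_cases h₂ : x l₂ ≤ x p
  · exact ⟨l₂, by simp, ⟨(hps.1.trans hps.2).trans_eq hyl₂.symm, hyl₂.le⟩, h₂⟩
  have hxa : x a ≤ x p := hamin hp
  -- If `a` lay outside the slab, the segment from `a` to `p` would cross a boundary line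
  -- strictly to the left of `l₁` or `l₂`.
  refine ⟨a, by simp, ⟨?_, ?_⟩, hxa⟩
  · by_contra! hlt
    obtain ⟨r, hr, hyr, hxr⟩ := hP.exists_apply_eq_le_max x y ha hp (mem_uIcc_of_le hlt.le hps.1)
    have := hl₁min ⟨hr, hyr⟩
    rw [max_eq_right hxa] at hxr
    exact h₁ (this.trans hxr)
  · by_contra! hlt
    obtain ⟨r, hr, hyr, hxr⟩ := hP.exists_apply_eq_le_max x y ha hp (mem_uIcc_of_ge hps.2 hlt.le)
    have := hl₂min ⟨hr, hyr⟩
    rw [max_eq_right hxa] at hxr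
    exact h₂ (this.trans hxr)

theorem Convex.exists_apply_eq_mem_Icc {Q : Set E} (hQ : Convex ℝ Q) {q₁ q₂ : E} (hq₁ : q₁ ∈ Q)
    (hq₂ : q₂ ∈ Q) {s t ξ : ℝ} (hy₁ : y q₁ ∈ Icc s t) (hy₂ : y q₂ ∈ Icc s t) (h₁ : x q₁ ≤ ξ)
    (h₂ : ξ ≤ x q₂) : ∃ q ∈ Q, x q = ξ ∧ y q ∈ Icc s t := by
  have hQ' : Convex ℝ (Q ∩ y ⁻¹' Icc s t) := hQ.inter ((convex_Icc s t).linear_preimage y)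
  obtain ⟨q, hq, rfl⟩ : ξ ∈ x '' segment ℝ q₁ q₂ := by
    rw [x.image_segment_eq_uIcc]
    exact mem_uIcc_of_le h₁ h₂
  have := hQ'.segment_subset ⟨hq₁, hy₁⟩ ⟨hq₂, hy₂⟩ hq
  exact ⟨q, this.1, rfl, this.2⟩

theorem Convex.exists_mem_convexHull_apply_eq_mem_Icc {P : Set E} (hP : Convex ℝ P)
    {a b l₁ l₂ r₁ r₂ p : E} {s t : ℝ} (ha : a ∈ P) (hamin : IsMinOn x P a) (hb : b ∈ P)
    (hbmax : IsMaxOn x P b) (hl₁ : l₁ ∈ P ∩ y ⁻¹' {s}) (hl₁min : IsMinOn x (P ∩ y ⁻¹' {s}) l₁)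
    (hl₂ : l₂ ∈ P ∩ y ⁻¹' {t}) (hl₂min : IsMinOn x (P ∩ y ⁻¹' {t}) l₂)
    (hr₁ : r₁ ∈ P ∩ y ⁻¹' {s}) (hr₁max : IsMaxOn x (P ∩ y ⁻¹' {s}) r₁)
    (hr₂ : r₂ ∈ P ∩ y ⁻¹' {t}) (hr₂max : IsMaxOn x (P ∩ y ⁻¹' {t}) r₂) (hp : p ∈ P)
    (hps : y p ∈ Icc s t) :
    ∃ q ∈ convexHull ℝ {a, b, l₁, l₂, r₁, r₂}, x q = x p ∧ y q ∈ Icc s t := by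
  obtain ⟨q₁, hq₁, hyq₁, hxq₁⟩ :=
    hP.exists_mem_Icc_le_of_isMinOn x y ha hamin hl₁ hl₁min hl₂ hl₂min hp hps
  obtain ⟨q₂, hq₂, hyq₂, hxq₂⟩ :=
    hP.exists_mem_Icc_le_of_isMinOn (-x) y hb hbmax.neg hr₁ hr₁max.neg hr₂ hr₂max.neg hp hps
  exact (convex_convexHull ℝ _).exists_apply_eq_mem_Icc x y
    (subset_convexHull ℝ _ (by rcases hq₁ with rfl | rfl | rfl <;> simp))
    (subset_convexHull ℝ _ (by rcases hq₂ with rfl | rfl | rfl <;> simp)) hyq₁ hyq₂ hxq₁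
    (by simpa using hxq₂)

end Slab

theorem exists_lt_mem_Icc_add_mul {m : ℕ} (hm : 0 < m) {a δ z : ℝ} (h₀ : a ≤ z)
    (h₁ : z ≤ a + m * δ) : ∃ k < m, z ∈ Icc (a + k * δ) (a + (k + 1) * δ) := by
  induction m, hm using Nat.le_induction with
  | base => exact ⟨0, one_pos, by simpa using h₀, by simpa using h₁⟩
  | succ n hn ih =>
    by_cases hz : z ≤ a + n * δ
    · obtain ⟨k, hk, hzk⟩ := ih hz
      exact ⟨k, by omega, hzk⟩
    · exact ⟨n, n.lt_succ_self, (not_le.1 hz).le, by exact_mod_cast h₁⟩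

theorem Convex.inter_preimage_singleton_nonempty {E : Type*} [AddCommGroup E] [Module ℝ E]
    {P : Set E} (hP : Convex ℝ P) (y : E →ₗ[ℝ] ℝ) {a b : E} (ha : a ∈ P) (hb : b ∈ P) {t : ℝ}
    (ht : t ∈ Icc (y a) (y b)) : (P ∩ y ⁻¹' {t}).Nonempty := by
  obtain ⟨r, hr, rfl⟩ : t ∈ y '' segment ℝ a b := by
    rw [y.image_segment_eq_uIcc]
    exact Icc_subset_uIcc ht
  exact ⟨r, hP.segment_subset ha hb hr, rfl⟩

theorem IsCompact.exists_finset_forall_exists_mem_convexHull {E : Type*} [AddCommGroup E]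
    [Module ℝ E] [TopologicalSpace E] {P : Set E} (hP : IsCompact P) (hconv : Convex ℝ P)
    {x y : E →ₗ[ℝ] ℝ} (hx : Continuous x) (hy : Continuous y) {a b : E} (ha : a ∈ P)
    (hb : b ∈ P) (hamin : IsMinOn y P a) (hbmax : IsMaxOn y P b) {m : ℕ} (hm : 0 < m) :
    ∃ S : Finset E, ↑S ⊆ P ∧ S.card ≤ 2 * m + 4 ∧ ∀ p ∈ P,
      ∃ q ∈ convexHull ℝ (S : Set E), x q = x p ∧ |y p - y q| ≤ (y b - y a) / m := by
  classical
  set δ := (y b - y a) / m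
  have hmδ : y a + m * δ = y b := by
    have : (m : ℝ) ≠ 0 := by positivity
    simp only [δ]; field_simp; ring
  set level : Fin (m + 1) → Set E := fun i => P ∩ y ⁻¹' {y a + i * δ}
  have hlevel : ∀ i, IsCompact (level i) ∧ (level i).Nonempty := fun i => by
    have hδ : 0 ≤ δ := div_nonneg (sub_nonneg.2 (hamin hb)) m.cast_nonneg
    have hi : (i : ℝ) ≤ m := by exact_mod_cast i.is_le
    refine ⟨hP.inter_right (isClosed_singleton.preimage hy),
      hconv.inter_preimage_singleton_nonempty y ha hb ⟨?_, ?_⟩⟩ <;> nlinarith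
  choose L hL hLmin using fun i => (hlevel i).1.exists_isMinOn (hlevel i).2 hx.continuousOn
  choose R hR hRmax using fun i => (hlevel i).1.exists_isMaxOn (hlevel i).2 hx.continuousOn
  obtain ⟨a', ha', ha'min⟩ := hP.exists_isMinOn ⟨a, ha⟩ hx.continuousOn
  obtain ⟨b', hb', hb'max⟩ := hP.exists_isMaxOn ⟨a, ha⟩ hx.continuousOn
  set S : Finset E := Finset.univ.image L ∪ Finset.univ.image R ∪ {a', b'}
  refine ⟨S, ?_, ?_, fun p hp => ?_⟩
  · simp only [S, Finset.coe_union, Finset.coe_image, Finset.coe_univ, image_univ,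
      Finset.coe_insert, Finset.coe_singleton, union_subset_iff, range_subset_iff,
      insert_subset_iff, singleton_subset_iff]
    exact ⟨⟨fun i => (hL i).1, fun i => (hR i).1⟩, ha', hb'⟩
  · calc S.card ≤ (Finset.univ.image L).card + (Finset.univ.image R).card + 2 :=
          (Finset.card_union_le _ _).trans
            (add_le_add (Finset.card_union_le _ _) (Finset.card_le_two))
      _ ≤ (m + 1) + (m + 1) + 2 := by
          gcongr <;> exact Finset.card_image_le.trans (by simp)
      _ = 2 * m + 4 := by ring
  obtain ⟨k, hk, hpk⟩ := exists_lt_mem_Icc_add_mul hm (hamin hp) (hmδ ▸ hbmax hp)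
  let i₀ : Fin (m + 1) := ⟨k, by omega⟩
  let i₁ : Fin (m + 1) := ⟨k + 1, by omega⟩
  obtain ⟨q, hq, hxq, hyq⟩ := hconv.exists_mem_convexHull_apply_eq_mem_Icc x y ha' ha'min hb'
    hb'max (hL i₀) (hLmin i₀) (hL i₁) (hLmin i₁) (hR i₀) (hRmax i₀) (hR i₁) (hRmax i₁) hp
    (by simpa [i₀, i₁] using hpk)
  refine ⟨q, convexHull_mono ?_ hq, hxq, ?_⟩
  · simp [S, insert_subset_iff]
  simp only [i₀, i₁, Nat.cast_add, Nat.cast_one] at hyq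
  exact abs_sub_le_iff.2 ⟨by linarith [hpk.2, hyq.1], by linarith [hpk.1, hyq.2]⟩

theorem Orientation.dist_eq_abs_sub_inner_of_areaForm_eq {E : Type*} [NormedAddCommGroup E]
    [InnerProductSpace ℝ E] [Fact (Module.finrank ℝ E = 2)] (o : Orientation ℝ E (Fin 2))
    {u p q : E} (hu : ‖u‖ = 1) (h : o.areaForm u p = o.areaForm u q) :
    dist p q = |inner ℝ u p - inner ℝ u q| := by
  have := o.inner_sq_add_areaForm_sq u (p - q)
  rw [map_sub, h, sub_self, hu, inner_sub_right] at this
  rw [dist_eq_norm, ← abs_norm]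
  exact (sq_eq_sq_iff_abs_eq_abs _ _).1 (by linarith)

theorem exists_width_eq {P : Set Plane} (hP : IsCompact P) (hne : P.Nonempty) :
    ∃ u : Plane, ‖u‖ = 1 ∧ ∃ a ∈ P, ∃ b ∈ P, IsMinOn (inner ℝ u) P a ∧
      IsMaxOn (inner ℝ u) P b ∧ width P = inner ℝ u b - inner ℝ u a := by
  set extent : Plane → ℝ := fun u =>
    sSup ((fun p => (inner ℝ p u : ℝ)) '' P) - sInf ((fun p => (inner ℝ p u : ℝ)) '' P)
  have hcont : Continuous extent := by
    have : Continuous (Function.uncurry fun (u p : Plane) => (inner ℝ p u : ℝ)) := by fun_prop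
    exact (hP.continuous_sSup this).sub (hP.continuous_sInf this)
  obtain ⟨u, hu, humin⟩ := (isCompact_sphere (0 : Plane) 1).exists_isMinOn
    (NormedSpace.sphere_nonempty.2 zero_le_one) hcont.continuousOn
  rw [mem_sphere_zero_iff_norm] at hu
  have hwidth : width P = extent u := IsLeast.csInf_eq
    ⟨⟨u, hu, rfl⟩, by rintro _ ⟨v, hv, rfl⟩; exact humin (mem_sphere_zero_iff_norm.2 hv)⟩
  have hinner : Continuous (inner ℝ u) := by fun_prop
  obtain ⟨a, ha, hamin⟩ := hP.exists_isMinOn hne hinner.continuousOn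
  obtain ⟨b, hb, hbmax⟩ := hP.exists_isMaxOn hne hinner.continuousOn
  refine ⟨u, hu, a, ha, b, hb, hamin, hbmax, hwidth.trans ?_⟩
  simp only [extent, real_inner_comm u]
  rw [IsGreatest.csSup_eq ⟨mem_image_of_mem _ hb, forall_mem_image.2 fun p hp => hbmax hp⟩,
    IsLeast.csInf_eq ⟨mem_image_of_mem _ ha, forall_mem_image.2 fun p hp => hamin hp⟩]

theorem approx_polygon (P : Set Plane) (hP : IsCompact P) (hconv : Convex ℝ P)
    (m : ℕ) (hm : 0 < m) :
    ∃ S : Finset Plane, ↑S ⊆ P ∧ S.card ≤ 2 * m + 5 ∧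
      convexHull ℝ (S : Set Plane) ⊆ P ∧
      ∀ p ∈ P, Metric.infDist p (convexHull ℝ (S : Set Plane)) ≤ width P / m := by
  obtain rfl | hne := P.eq_empty_or_nonempty
  · exact ⟨∅, by simp⟩
  obtain ⟨u, hu, a, ha, b, hb, hamin, hbmax, hwidth⟩ := exists_width_eq hP hne
  have : Fact (Module.finrank ℝ Plane = 2) := ⟨finrank_euclideanSpace_fin⟩
  let o : Orientation ℝ Plane (Fin 2) := (EuclideanSpace.basisFun (Fin 2) ℝ).toBasis.orientation
  obtain ⟨S, hSP, hcard, hS⟩ := hP.exists_finset_forall_exists_mem_convexHull hconv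
    (x := o.areaForm u) (y := innerₛₗ ℝ u) (LinearMap.continuous_of_finiteDimensional _)
    (LinearMap.continuous_of_finiteDimensional _) ha hb hamin hbmax hm
  refine ⟨S, hSP, by omega, convexHull_min hSP hconv, fun p hp => ?_⟩
  obtain ⟨q, hq, hxq, hyq⟩ := hS p hp
  calc Metric.infDist p (convexHull ℝ (S : Set Plane))
      ≤ dist p q := Metric.infDist_le_dist_of_mem hq
    _ = |inner ℝ u p - inner ℝ u q| := o.dist_eq_abs_sub_inner_of_areaForm_eq hu hxq.symm
    _ ≤ width P / m := hwidth ▸ hyq
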